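/- arXiv:1302.0513 — 3 statements merged into one kernel-verified Lean document; each statement's English description precedes it below -/
import Mathlib

section
/- Let m ≤ n and s ≥ 0 be a real number. Define the sequence Λ_s of m+n real numbers: Λ_s(i) = (s−(m−1))/2 + (i−1) for 1 ≤ i ≤ m, and Λ_s(m+j) = (−s−(n−1))/2 + (j−1) for 1 ≤ j ≤ n. If a permutation w of {1,...,m+n} satisfies w(1) < ... < w(m), w(m+1) < ... < w(m+n), and Λ_s(w⁻¹(i)) = Λ_s(i) for all i, then either w is the identity, or s = 0 and m = n (in which case there are exactly two such w). -/
/-!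
Each block of `Λ_s` is an arithmetic progression of step `1`, so `Λ_s` is injective on each block
and a stabilising shuffle can only move a point to the other block. The whole shuffle is decided
by `w (m + 1)`: if it is `m + 1`, monotonicity pins the second block and then the first one. Otherwise
`Λ_s (m + 1) = Λ_s i` for some `i ≤ m`, i.e. `2 s + (n - m) + 2 (i - 1) = 0`, forcing `s = 0`,
`m = n`, `i = 1`; then `Λ_s (m + i) = Λ_s i` and the only such shuffle is the swap of the blocks.
-/

open Set

def shuffleStabilizer (m n : ℕ) (Λ : ℕ → ℝ) : Set (ℕ → ℕ) :=
  {w | BijOn w (Icc 1 (m + n)) (Icc 1 (m + n)) ∧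
    (∀ i ∉ Icc 1 (m + n), w i = i) ∧
    (∀ i j, 1 ≤ i → i < j → j ≤ m → w i < w j) ∧
    (∀ i j, m + 1 ≤ i → i < j → j ≤ m + n → w i < w j) ∧
    (∀ i ∈ Icc 1 (m + n), Λ (w i) = Λ i)}

def blockSwap (m i : ℕ) : ℕ :=
  if 1 ≤ i ∧ i ≤ m then m + i else if m + 1 ≤ i ∧ i ≤ m + m then i - m else i

section

variable {m n : ℕ} {s : ℝ} {Λ : ℕ → ℝ} {w : ℕ → ℕ}

lemma strictMonoOn_block₁
    (hΛ1 : ∀ i, 1 ≤ i → i ≤ m → Λ i = (s - ((m : ℝ) - 1)) / 2 + ((i : ℝ) - 1)) :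
    StrictMonoOn Λ (Icc 1 m) := by
  intro a ha b hb hab
  have : (a : ℝ) < b := by exact_mod_cast hab
  rw [hΛ1 a ha.1 ha.2, hΛ1 b hb.1 hb.2]
  linarith

lemma strictMonoOn_block₂
    (hΛ2 : ∀ j, 1 ≤ j → j ≤ n → Λ (m + j) = (-s - ((n : ℝ) - 1)) / 2 + ((j : ℝ) - 1)) :
    StrictMonoOn Λ (Icc (m + 1) (m + n)) := by
  rintro a ⟨ha₁, ha₂⟩ b ⟨hb₁, hb₂⟩ hab
  obtain ⟨a, rfl⟩ := Nat.exists_eq_add_of_le (le_of_add_le_left ha₁)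
  obtain ⟨b, rfl⟩ := Nat.exists_eq_add_of_le (le_of_add_le_left hb₁)
  have : (a : ℝ) < b := by exact_mod_cast Nat.lt_of_add_lt_add_left hab
  rw [hΛ2 a (by omega) (by omega), hΛ2 b (by omega) (by omega)]
  linarith

lemma eq_zero_and_eq_of_apply_eq_apply_add_one (hs : 0 ≤ s) (hmn : m ≤ n)
    (hΛ1 : ∀ i, 1 ≤ i → i ≤ m → Λ i = (s - ((m : ℝ) - 1)) / 2 + ((i : ℝ) - 1))
    (hΛ2 : ∀ j, 1 ≤ j → j ≤ n → Λ (m + j) = (-s - ((n : ℝ) - 1)) / 2 + ((j : ℝ) - 1))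
    {i : ℕ} (hi : i ∈ Icc 1 m) (h : Λ i = Λ (m + 1)) : s = 0 ∧ m = n := by
  rw [hΛ1 i hi.1 hi.2, hΛ2 1 le_rfl (hi.1.trans (hi.2.trans hmn))] at h
  have hi₁ : (1 : ℝ) ≤ i := by exact_mod_cast hi.1
  have hmn' : (m : ℝ) ≤ n := by exact_mod_cast hmn
  push_cast at h
  exact ⟨by linarith, by exact_mod_cast (by linarith : (m : ℝ) = n)⟩

lemma apply_add_one_mem_block₁ (hw : w ∈ shuffleStabilizer m n Λ)
    (h₂ : InjOn Λ (Icc (m + 1) (m + n))) (h : w (m + 1) ≠ m + 1) : w (m + 1) ∈ Icc 1 m := by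
  obtain ⟨hbij, hid, -, -, hfix⟩ := hw
  have hmem : m + 1 ∈ Icc 1 (m + n) := by_contra fun hmem => h (hid _ hmem)
  have hwmem := hbij.mapsTo hmem
  refine ⟨hwmem.1, not_lt.mp fun hlt => h ?_⟩
  exact h₂ ⟨hlt, hwmem.2⟩ ⟨le_rfl, hmem.2⟩ (hfix _ hmem)

lemma eq_id_of_apply_add_one_eq (hw : w ∈ shuffleStabilizer m n Λ)
    (h₁ : InjOn Λ (Icc 1 m)) (h₂ : InjOn Λ (Icc (m + 1) (m + n))) (h : w (m + 1) = m + 1) :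
    w = id := by
  obtain ⟨hbij, hid, -, hsh₂, hfix⟩ := hw
  have hblock₂ : ∀ k ∈ Icc (m + 1) (m + n), w k = k := by
    rintro k ⟨hk₁, hk₂⟩
    have hkmem : k ∈ Icc 1 (m + n) := ⟨by omega, hk₂⟩
    have hle : m + 1 ≤ w k := by
      rcases hk₁.eq_or_lt with rfl | hlt
      · exact h.ge
      · exact h ▸ (hsh₂ _ _ le_rfl hlt hk₂).le
    exact h₂ ⟨hle, (hbij.mapsTo hkmem).2⟩ ⟨hk₁, hk₂⟩ (hfix k hkmem)
  funext i
  by_cases hi : i ∈ Icc 1 (m + n)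
  swap
  · exact hid i hi
  have hwi := hbij.mapsTo hi
  by_cases him : i ≤ m
  · refine h₁ ⟨hwi.1, not_lt.mp fun hlt => ?_⟩ ⟨hi.1, him⟩ (hfix i hi)
    have : w (w i) = w i := hblock₂ _ ⟨hlt, hwi.2⟩
    have := hbij.injOn hwi hi this
    omega
  · exact hblock₂ i ⟨by omega, hi.2⟩

lemma apply_add_eq_apply (hs : s = 0)
    (hΛ1 : ∀ i, 1 ≤ i → i ≤ m → Λ i = (s - ((m : ℝ) - 1)) / 2 + ((i : ℝ) - 1))
    (hΛ2 : ∀ j, 1 ≤ j → j ≤ m → Λ (m + j) = (-s - ((m : ℝ) - 1)) / 2 + ((j : ℝ) - 1)) :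
    ∀ i ∈ Icc 1 m, Λ (m + i) = Λ i := by
  intro i hi
  rw [hΛ1 i hi.1 hi.2, hΛ2 i hi.1 hi.2, hs]
  ring

lemma blockSwap_of_le {i : ℕ} (hi : 1 ≤ i) (him : i ≤ m) : blockSwap m i = m + i := by
  simp [blockSwap, hi, him]

lemma blockSwap_add {j : ℕ} (hj : 1 ≤ j) (hjm : j ≤ m) : blockSwap m (m + j) = j := by
  unfold blockSwap
  split_ifs <;> omega

lemma blockSwap_of_notMem {i : ℕ} (hi : i ∉ Icc 1 (m + m)) : blockSwap m i = i := by
  simp only [mem_Icc] at hi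
  unfold blockSwap
  split_ifs <;> omega

lemma blockSwap_blockSwap (i : ℕ) : blockSwap m (blockSwap m i) = i := by
  unfold blockSwap
  split_ifs <;> omega

lemma blockSwap_ne_id (hm : 1 ≤ m) : blockSwap m ≠ id := by
  intro h
  have := blockSwap_of_le le_rfl hm
  rw [h, id] at this
  omega

lemma blockSwap_mem_shuffleStabilizer (hΛ : ∀ i ∈ Icc 1 m, Λ (m + i) = Λ i) :
    blockSwap m ∈ shuffleStabilizer m m Λ := by
  have hmaps : MapsTo (blockSwap m) (Icc 1 (m + m)) (Icc 1 (m + m)) := by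
    intro i hi
    simp only [mem_Icc, blockSwap] at hi ⊢
    split_ifs <;> omega
  refine ⟨InvOn.bijOn ⟨fun i _ => blockSwap_blockSwap i, fun i _ => blockSwap_blockSwap i⟩
      hmaps hmaps, ?_, ?_, ?_, ?_⟩
  · exact fun _ => blockSwap_of_notMem
  iterate 2
    · intro i j _ _ _
      unfold blockSwap
      split_ifs <;> omega
  · rintro i ⟨hi₁, hi₂⟩
    by_cases him : i ≤ m
    · rw [blockSwap_of_le hi₁ him, hΛ i ⟨hi₁, him⟩]
    · obtain ⟨j, rfl⟩ := Nat.exists_eq_add_of_le (Nat.le_of_not_le him)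
      rw [blockSwap_add (by omega) (by omega), hΛ j ⟨by omega, by omega⟩]

lemma apply_eq_self_or_blockSwap (hw : w ∈ shuffleStabilizer m m Λ)
    (h₁ : InjOn Λ (Icc 1 m)) (h₂ : InjOn Λ (Icc (m + 1) (m + m)))
    (hΛ : ∀ i ∈ Icc 1 m, Λ (m + i) = Λ i) {k : ℕ} (hk : k ∈ Icc 1 (m + m)) :
    w k = k ∨ w k = blockSwap m k := by
  obtain ⟨hbij, -, -, -, hfix⟩ := hw
  obtain ⟨hwk₁, hwk₂⟩ := hbij.mapsTo hk
  have hΛk := hfix k hk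
  obtain ⟨hk₁, hk₂⟩ := hk
  rcases le_or_gt k m with hkm | hkm <;> rcases le_or_gt (w k) m with hwm | hwm
  · exact Or.inl (h₁ ⟨hwk₁, hwm⟩ ⟨hk₁, hkm⟩ hΛk)
  · rw [blockSwap_of_le hk₁ hkm]
    have hmk : m + k ∈ Icc (m + 1) (m + m) := ⟨by omega, by omega⟩
    exact Or.inr (h₂ ⟨hwm, hwk₂⟩ hmk (hΛk.trans (hΛ k ⟨hk₁, hkm⟩).symm))
  · obtain ⟨j, rfl⟩ := Nat.exists_eq_add_of_le hkm.le
    have hj : j ∈ Icc 1 m := ⟨by omega, by omega⟩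
    rw [blockSwap_add hj.1 hj.2]
    exact Or.inr (h₁ ⟨hwk₁, hwm⟩ hj (hΛk.trans (hΛ j hj)))
  · exact Or.inl (h₂ ⟨hwm, hwk₂⟩ ⟨hkm, hk₂⟩ hΛk)

lemma eq_blockSwap_of_apply_add_one_ne (hw : w ∈ shuffleStabilizer m m Λ)
    (h₁ : InjOn Λ (Icc 1 m)) (h₂ : InjOn Λ (Icc (m + 1) (m + m)))
    (hΛ : ∀ i ∈ Icc 1 m, Λ (m + i) = Λ i) (h : w (m + 1) ≠ m + 1) : w = blockSwap m := by
  obtain ⟨hw₁, hwm⟩ := apply_add_one_mem_block₁ hw h₂ h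
  have hor := fun k (hk : k ∈ Icc 1 (m + m)) => apply_eq_self_or_blockSwap hw h₁ h₂ hΛ hk
  obtain ⟨hbij, hid, hsh₁, -, -⟩ := hw
  have hm : 1 ≤ m := hw₁.trans hwm
  have hmem : ∀ k, 1 ≤ k → k ≤ m + m → k ∈ Icc 1 (m + m) := fun k h₁ h₂ => ⟨h₁, h₂⟩
  have hw_add_one : w (m + 1) = 1 := by
    simpa only [blockSwap_add le_rfl hm] using
      (hor (m + 1) (hmem _ (by omega) (by omega))).resolve_left h
  have hw_one : w 1 = m + 1 := by
    rw [← blockSwap_of_le le_rfl hm]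
    refine (hor 1 (hmem _ le_rfl (by omega))).resolve_left fun h1 => ?_
    have := hbij.injOn (hmem _ le_rfl (by omega)) (hmem _ (by omega) (by omega))
      (h1.trans hw_add_one.symm)
    omega
  have hblock₁ : ∀ i, 1 ≤ i → i ≤ m → w i = m + i := by
    intro i hi₁ him
    rcases hi₁.eq_or_lt with rfl | hlt
    · exact hw_one
    · have hgt := hsh₁ 1 i le_rfl hlt him
      rw [← blockSwap_of_le hi₁ him]
      exact (hor i (hmem _ hi₁ (by omega))).resolve_left (by omega)
  funext k
  by_cases hk : k ∈ Icc 1 (m + m)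
  swap
  · rw [hid k hk, blockSwap_of_notMem hk]
  have hk₂ := hk.2
  by_cases hkm : k ≤ m
  · rw [hblock₁ k hk.1 hkm, blockSwap_of_le hk.1 hkm]
  · obtain ⟨j, rfl⟩ := Nat.exists_eq_add_of_le (Nat.le_of_not_le hkm)
    have hj : j ∈ Icc 1 (m + m) := hmem _ (by omega) (by omega)
    refine (hor _ hk).resolve_left fun hfixed => ?_
    have := hbij.injOn hk hj (hfixed.trans (hblock₁ j hj.1 (by omega)).symm)
    omega

lemma shuffleStabilizer_eq_pair (h₁ : InjOn Λ (Icc 1 m)) (h₂ : InjOn Λ (Icc (m + 1) (m + m)))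
    (hΛ : ∀ i ∈ Icc 1 m, Λ (m + i) = Λ i) :
    shuffleStabilizer m m Λ = {id, blockSwap m} := by
  ext w
  refine ⟨fun hw => ?_, ?_⟩
  · by_cases h : w (m + 1) = m + 1
    · exact Or.inl (eq_id_of_apply_add_one_eq hw h₁ h₂ h)
    · exact Or.inr (eq_blockSwap_of_apply_add_one_ne hw h₁ h₂ hΛ h)
  · rintro (rfl | rfl)
    · exact ⟨bijOn_id _, fun _ _ => rfl, fun _ _ _ h _ => h, fun _ _ _ h _ => h, fun _ _ => rfl⟩
    · exact blockSwap_mem_shuffleStabilizer hΛ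

end

theorem stmt1_general (m n : ℕ) (hmn : m ≤ n) (s : ℝ) (hs : 0 ≤ s)
    (Λ : ℕ → ℝ)
    (hΛ1 : ∀ i, 1 ≤ i → i ≤ m → Λ i = (s - ((m : ℝ) - 1)) / 2 + ((i : ℝ) - 1))
    (hΛ2 : ∀ j, 1 ≤ j → j ≤ n → Λ (m + j) = (-s - ((n : ℝ) - 1)) / 2 + ((j : ℝ) - 1))
    (w : ℕ → ℕ)
    (hbij : Set.BijOn w (Set.Icc 1 (m + n)) (Set.Icc 1 (m + n)))
    (hid : ∀ i ∉ Set.Icc 1 (m + n), w i = i)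
    (hsh1 : ∀ i j, 1 ≤ i → i < j → j ≤ m → w i < w j)
    (hsh2 : ∀ i j, m + 1 ≤ i → i < j → j ≤ m + n → w i < w j)
    (hfix : ∀ i ∈ Set.Icc 1 (m + n), Λ (w i) = Λ i) :
    (∀ i, w i = i) ∨
      (s = 0 ∧ m = n ∧
        {w' : ℕ → ℕ |
            Set.BijOn w' (Set.Icc 1 (m + n)) (Set.Icc 1 (m + n)) ∧
            (∀ i ∉ Set.Icc 1 (m + n), w' i = i) ∧
            (∀ i j, 1 ≤ i → i < j → j ≤ m → w' i < w' j) ∧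
            (∀ i j, m + 1 ≤ i → i < j → j ≤ m + n → w' i < w' j) ∧
            (∀ i ∈ Set.Icc 1 (m + n), Λ (w' i) = Λ i)}.ncard = 2) := by
  have hw : w ∈ shuffleStabilizer m n Λ := ⟨hbij, hid, hsh1, hsh2, hfix⟩
  have h₁ := (strictMonoOn_block₁ hΛ1).injOn
  have h₂ := (strictMonoOn_block₂ hΛ2).injOn
  by_cases h : w (m + 1) = m + 1
  · exact Or.inl (congrFun (eq_id_of_apply_add_one_eq hw h₁ h₂ h))
  have hw₁ := apply_add_one_mem_block₁ hw h₂ h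
  have hm : 1 ≤ m := hw₁.1.trans hw₁.2
  obtain ⟨hs₀, rfl⟩ := eq_zero_and_eq_of_apply_eq_apply_add_one hs hmn hΛ1 hΛ2 hw₁
    (hfix _ ⟨by omega, by omega⟩)
  refine Or.inr ⟨hs₀, rfl, ?_⟩
  change (shuffleStabilizer m m Λ).ncard = 2
  rw [shuffleStabilizer_eq_pair h₁ h₂ (apply_add_eq_apply hs₀ hΛ1 hΛ2)]
  exact ncard_pair (blockSwap_ne_id hm).symm

/-- For `m ≤ n`, `s ≥ 0`, and the exponent sequence `Λ_s` of the
degenerate principal series, any shuffle permutation `w` (increasing on each of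
the blocks `{1,...,m}` and `{m+1,...,m+n}`) fixing `Λ_s` (i.e. `Λ_s ∘ w⁻¹ = Λ_s`,
equivalently `Λ_s ∘ w = Λ_s`) is the identity, unless `s = 0` and `m = n`, in
which case there are exactly two such `w`. -/
theorem stmt1 (m n : ℕ) (hm : 1 ≤ m) (hmn : m ≤ n) (s : ℝ) (hs : 0 ≤ s)
    (Λ : ℕ → ℝ)
    (hΛ1 : ∀ i, 1 ≤ i → i ≤ m → Λ i = (s - ((m : ℝ) - 1)) / 2 + ((i : ℝ) - 1))
    (hΛ2 : ∀ j, 1 ≤ j → j ≤ n → Λ (m + j) = (-s - ((n : ℝ) - 1)) / 2 + ((j : ℝ) - 1))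
    (w : ℕ → ℕ)
    (hbij : Set.BijOn w (Set.Icc 1 (m + n)) (Set.Icc 1 (m + n)))
    (hid : ∀ i ∉ Set.Icc 1 (m + n), w i = i)
    (hsh1 : ∀ i j, 1 ≤ i → i < j → j ≤ m → w i < w j)
    (hsh2 : ∀ i j, m + 1 ≤ i → i < j → j ≤ m + n → w i < w j)
    (hfix : ∀ i ∈ Set.Icc 1 (m + n), Λ (w i) = Λ i) :
    (∀ i, w i = i) ∨
      (s = 0 ∧ m = n ∧
        {w' : ℕ → ℕ |
            Set.BijOn w' (Set.Icc 1 (m + n)) (Set.Icc 1 (m + n)) ∧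
            (∀ i ∉ Set.Icc 1 (m + n), w' i = i) ∧
            (∀ i j, 1 ≤ i → i < j → j ≤ m → w' i < w' j) ∧
            (∀ i j, m + 1 ≤ i → i < j → j ≤ m + n → w' i < w' j) ∧
            (∀ i ∈ Set.Icc 1 (m + n), Λ (w' i) = Λ i)}.ncard = 2) :=
  stmt1_general m n hmn s hs Λ hΛ1 hΛ2 w hbij hid hsh1 hsh2 hfix
end

section
/- Let m ≤ n, s ∈ ℝ, and define Λ_s as the sequence of exponents: Λ_s(i) = (s−(m−1))/2 + (i−1) for 1 ≤ i ≤ m and Λ_s(m+j) = (−s−(n−1))/2 + (j−1) for 1 ≤ j ≤ n. Suppose w₁ ≠ w₂ are shuffle permutations (increasing on {1,...,m} and on {m+1,...,m+n}) with w₁∘Λ_s = w₂∘Λ_s (i.e. Λ_s∘w₁⁻¹w₂ = Λ_s as sequences). Then there is a nonempty finite set I ⊆ {1,...,m} such that s + (m+n)/2 + i ∈ {m+1,...,m+n} for all i ∈ I, w₂(i) = w₁(s+(m+n)/2+i) and w₂(s+(m+n)/2+i) = w₁(i) for i ∈ I, and w₂ = w₁ on the complement of {i, s+(m+n)/2+i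 : i ∈ I}. -/
/-!
The permutation `σ = w₁⁻¹ ∘ w₂` preserves `Λ_s`, and `Λ_s` is injective on each of the two
blocks, so every fibre of `Λ_s` has at most two points, one in each block. Hence each point
moved by `σ` is swapped with the other point of its fibre, which lies in the other block; for
`i ≤ m` and `j > m`, the equation `Λ_s j = Λ_s i` says exactly `j = s + (m + n) / 2 + i`.
-/

open Set

lemma eq_of_injOn_union {α β : Type*} {A B : Set α} {f : α → β}
    (hA : InjOn f A) (hB : InjOn f B) {i j k : α}
    (hi : i ∈ A ∪ B) (hj : j ∈ A ∪ B) (hk : k ∈ A ∪ B)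
    (hkj : f k = f j) (hji : f j = f i) (hk_ne : k ≠ j) (hj_ne : j ≠ i) : k = i := by
  rcases hi with hi | hi <;> rcases hj with hj | hj <;> rcases hk with hk | hk
  · exact absurd (hA hj hi hji) hj_ne
  · exact absurd (hA hj hi hji) hj_ne
  · exact hA hk hi (hkj.trans hji)
  · exact absurd (hB hk hj hkj) hk_ne
  · exact absurd (hA hk hj hkj) hk_ne
  · exact hB hk hi (hkj.trans hji)
  · exact absurd (hB hj hi hji) hj_ne
  · exact absurd (hB hj hi hji) hj_ne

theorem exists_swap_partner {α β γ : Type*} {S A B : Set α} (hS : S ⊆ A ∪ B) {Λ : α → β}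
    (hA : InjOn Λ A) (hB : InjOn Λ B) {w₁ w₂ : α → γ} (hw₂ : InjOn w₂ S)
    (hw : MapsTo w₂ S (w₁ '' S)) (hfix : ∀ i ∈ S, ∀ j ∈ S, w₂ i = w₁ j → Λ j = Λ i) :
    ∀ i ∈ S, w₂ i ≠ w₁ i → ∃ j ∈ S, j ≠ i ∧ Λ j = Λ i ∧ w₂ i = w₁ j ∧ w₂ j = w₁ i := by
  intro i hi hmoved
  obtain ⟨j, hj, hji⟩ := hw hi
  obtain ⟨k, hk, hkj⟩ := hw hj
  have hΛj := hfix i hi j hj hji.symm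
  have hΛk := hfix j hj k hk hkj.symm
  have hj_ne : j ≠ i := by
    rintro rfl
    exact hmoved hji.symm
  have hk_ne : k ≠ j := by
    rintro rfl
    exact hj_ne (hw₂ hj hi (hkj.symm.trans hji))
  have hki : k = i := eq_of_injOn_union hA hB (hS hi) (hS hj) (hS hk) hΛk hΛj hk_ne hj_ne
  exact ⟨j, hj, hj_ne, hΛj, hji.symm, by rw [← hkj, hki]⟩

lemma injOn_of_eq_const_add_cast {Λ : ℕ → ℝ} {T : Set ℕ} (c : ℝ)
    (h : ∀ i ∈ T, Λ i = c + i) : InjOn Λ T := by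
  intro i hi j hj hij
  rw [h i hi, h j hj] at hij
  exact_mod_cast add_left_cancel hij

section Exponents

variable {m n : ℕ} {s : ℝ} {Λ : ℕ → ℝ}

lemma exponent_lower
    (hΛ1 : ∀ i, 1 ≤ i → i ≤ m → Λ i = (s - ((m : ℝ) - 1)) / 2 + ((i : ℝ) - 1)) :
    ∀ i ∈ Icc 1 m, Λ i = ((s - ((m : ℝ) - 1)) / 2 - 1) + i := by
  rintro i ⟨hi1, hi2⟩
  rw [hΛ1 i hi1 hi2]
  ring

lemma exponent_upper
    (hΛ2 : ∀ j, 1 ≤ j → j ≤ n → Λ (m + j) = (-s - ((n : ℝ) - 1)) / 2 + ((j : ℝ) - 1)) :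
    ∀ j ∈ Icc (m + 1) (m + n), Λ j = ((-s - ((n : ℝ) - 1)) / 2 - m - 1) + j := by
  rintro j ⟨hj1, hj2⟩
  obtain ⟨b, rfl⟩ := Nat.exists_eq_add_of_le (Nat.le_of_succ_le hj1)
  rw [hΛ2 b (by omega) (by omega)]
  push_cast
  ring

lemma partner_of_exponent_eq
    (hΛ1 : ∀ i, 1 ≤ i → i ≤ m → Λ i = (s - ((m : ℝ) - 1)) / 2 + ((i : ℝ) - 1))
    (hΛ2 : ∀ j, 1 ≤ j → j ≤ n → Λ (m + j) = (-s - ((n : ℝ) - 1)) / 2 + ((j : ℝ) - 1))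
    {i j : ℕ} (hi : i ∈ Icc 1 m) (hj : j ∈ Icc 1 (m + n)) (hji : j ≠ i) (hΛ : Λ j = Λ i) :
    m + 1 ≤ j ∧ (j : ℝ) = s + ((m : ℝ) + n) / 2 + (i : ℝ) := by
  have hj_upper : m + 1 ≤ j := by
    by_contra! hjm
    exact hji (injOn_of_eq_const_add_cast _ (exponent_lower hΛ1)
      ⟨hj.1, Nat.le_of_lt_succ hjm⟩ hi hΛ)
  refine ⟨hj_upper, ?_⟩
  rw [exponent_upper hΛ2 j ⟨hj_upper, hj.2⟩, exponent_lower hΛ1 i hi] at hΛ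
  linarith

lemma le_of_exponent_eq
    (hΛ2 : ∀ j, 1 ≤ j → j ≤ n → Λ (m + j) = (-s - ((n : ℝ) - 1)) / 2 + ((j : ℝ) - 1))
    {i j : ℕ} (hi : i ∈ Icc (m + 1) (m + n)) (hj : j ∈ Icc 1 (m + n)) (hji : j ≠ i)
    (hΛ : Λ j = Λ i) : j ≤ m := by
  by_contra! hjm
  exact hji (injOn_of_eq_const_add_cast _ (exponent_upper hΛ2) ⟨hjm, hj.2⟩ hi hΛ)

end Exponents

theorem stmt2_general (m n : ℕ) (s : ℝ)
    (Λ : ℕ → ℝ)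
    (hΛ1 : ∀ i, 1 ≤ i → i ≤ m → Λ i = (s - ((m : ℝ) - 1)) / 2 + ((i : ℝ) - 1))
    (hΛ2 : ∀ j, 1 ≤ j → j ≤ n → Λ (m + j) = (-s - ((n : ℝ) - 1)) / 2 + ((j : ℝ) - 1))
    (w₁ w₂ : ℕ → ℕ)
    (hbij₁ : Set.BijOn w₁ (Set.Icc 1 (m + n)) (Set.Icc 1 (m + n)))
    (hid₁ : ∀ i ∉ Set.Icc 1 (m + n), w₁ i = i)
    (hbij₂ : Set.BijOn w₂ (Set.Icc 1 (m + n)) (Set.Icc 1 (m + n)))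
    (hid₂ : ∀ i ∉ Set.Icc 1 (m + n), w₂ i = i)
    (hne : w₁ ≠ w₂)
    (hfix : ∀ i ∈ Set.Icc 1 (m + n), ∀ j ∈ Set.Icc 1 (m + n),
      w₂ i = w₁ j → Λ j = Λ i) :
    ∃ I : Finset ℕ, I.Nonempty ∧ (↑I : Set ℕ) ⊆ Set.Icc 1 m ∧
      (∀ i ∈ I, ∃ j : ℕ,
        ((j : ℝ) = s + ((m : ℝ) + n) / 2 + (i : ℝ)) ∧ m + 1 ≤ j ∧ j ≤ m + n ∧
        w₂ i = w₁ j ∧ w₂ j = w₁ i) ∧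
      (∀ k ∈ Set.Icc 1 (m + n), k ∉ I →
        (∀ i ∈ I, (k : ℝ) ≠ s + ((m : ℝ) + n) / 2 + (i : ℝ)) → w₂ k = w₁ k) := by
  have hcover : Icc 1 (m + n) ⊆ Icc 1 m ∪ Icc (m + 1) (m + n) := fun k ⟨hk1, hk2⟩ =>
    (le_or_gt k m).imp (⟨hk1, ·⟩) (⟨·, hk2⟩)
  have hpartner := exists_swap_partner hcover
    (injOn_of_eq_const_add_cast _ (exponent_lower hΛ1))
    (injOn_of_eq_const_add_cast _ (exponent_upper hΛ2))
    hbij₂.injOn (by rw [hbij₁.image_eq]; exact hbij₂.mapsTo) hfix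
  set I := {i ∈ Finset.Icc 1 m | w₂ i ≠ w₁ i}
  have hmoved : ∀ k ∈ Icc 1 (m + n), w₂ k ≠ w₁ k →
      k ∈ I ∨ ∃ i ∈ I, (k : ℝ) = s + ((m : ℝ) + n) / 2 + (i : ℝ) := by
    intro k hk hk_moved
    by_cases hkm : k ≤ m
    · exact Or.inl (Finset.mem_filter.mpr ⟨Finset.mem_Icc.mpr ⟨hk.1, hkm⟩, hk_moved⟩)
    obtain ⟨j, hj, hjk, hΛ, hkj, hjk'⟩ := hpartner k hk hk_moved
    have hjm := le_of_exponent_eq hΛ2 ⟨by omega, hk.2⟩ hj hjk hΛ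
    have hjI : j ∈ I := Finset.mem_filter.mpr
      ⟨Finset.mem_Icc.mpr ⟨hj.1, hjm⟩, by rw [hjk', ← hkj]; exact hk_moved.symm⟩
    exact Or.inr ⟨j, hjI, (partner_of_exponent_eq hΛ1 hΛ2 ⟨hj.1, hjm⟩ hk hjk.symm hΛ.symm).2⟩
  refine ⟨I, ?_, fun i hi => ?_, fun i hi => ?_, fun k hk hkI hk_ne => ?_⟩
  · obtain ⟨k, hk⟩ := Function.ne_iff.mp hne
    have hkS : k ∈ Icc 1 (m + n) := by_contra fun h => hk ((hid₁ k h).trans (hid₂ k h).symm)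
    rcases hmoved k hkS (Ne.symm hk) with hkI | ⟨i, hiI, -⟩
    exacts [⟨k, hkI⟩, ⟨i, hiI⟩]
  · exact Finset.mem_Icc.mp (Finset.mem_filter.mp hi).1
  · obtain ⟨hi, hi_moved⟩ := Finset.mem_filter.mp hi
    have hi := Finset.mem_Icc.mp hi
    obtain ⟨j, hj, hji, hΛ, hij, hji'⟩ := hpartner i ⟨hi.1, by omega⟩ hi_moved
    obtain ⟨hjm, hj_eq⟩ := partner_of_exponent_eq hΛ1 hΛ2 hi hj hji hΛ
    exact ⟨j, hj_eq, hjm, hj.2, hij, hji'⟩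
  · by_contra hk_moved
    rcases hmoved k hk hk_moved with hkI' | ⟨i, hiI, hk_eq⟩
    exacts [hkI hkI', hk_ne i hiI hk_eq]

/-- If two distinct shuffle permutations `w₁ ≠ w₂` satisfy
`w₁(Λ_s) = w₂(Λ_s)` (i.e. `Λ_s ∘ w₁⁻¹ ∘ w₂ = Λ_s`, encoded here as:
`w₂ i = w₁ j → Λ j = Λ i`), then there is a nonempty set `I ⊆ {1,...,m}` such
that for each `i ∈ I` the index `j = s + (m+n)/2 + i` lies in `{m+1,...,m+n}`,
the values of `w₁` and `w₂` are swapped at `i` and `j`, and `w₁ = w₂` away from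
these indices. -/
theorem stmt2 (m n : ℕ) (hm : 1 ≤ m) (hmn : m ≤ n) (s : ℝ)
    (Λ : ℕ → ℝ)
    (hΛ1 : ∀ i, 1 ≤ i → i ≤ m → Λ i = (s - ((m : ℝ) - 1)) / 2 + ((i : ℝ) - 1))
    (hΛ2 : ∀ j, 1 ≤ j → j ≤ n → Λ (m + j) = (-s - ((n : ℝ) - 1)) / 2 + ((j : ℝ) - 1))
    (w₁ w₂ : ℕ → ℕ)
    (hbij₁ : Set.BijOn w₁ (Set.Icc 1 (m + n)) (Set.Icc 1 (m + n)))
    (hid₁ : ∀ i ∉ Set.Icc 1 (m + n), w₁ i = i)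
    (hsh₁a : ∀ i j, 1 ≤ i → i < j → j ≤ m → w₁ i < w₁ j)
    (hsh₁b : ∀ i j, m + 1 ≤ i → i < j → j ≤ m + n → w₁ i < w₁ j)
    (hbij₂ : Set.BijOn w₂ (Set.Icc 1 (m + n)) (Set.Icc 1 (m + n)))
    (hid₂ : ∀ i ∉ Set.Icc 1 (m + n), w₂ i = i)
    (hsh₂a : ∀ i j, 1 ≤ i → i < j → j ≤ m → w₂ i < w₂ j)
    (hsh₂b : ∀ i j, m + 1 ≤ i → i < j → j ≤ m + n → w₂ i < w₂ j)
    (hne : w₁ ≠ w₂)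
    (hfix : ∀ i ∈ Set.Icc 1 (m + n), ∀ j ∈ Set.Icc 1 (m + n),
      w₂ i = w₁ j → Λ j = Λ i) :
    ∃ I : Finset ℕ, I.Nonempty ∧ (↑I : Set ℕ) ⊆ Set.Icc 1 m ∧
      (∀ i ∈ I, ∃ j : ℕ,
        ((j : ℝ) = s + ((m : ℝ) + n) / 2 + (i : ℝ)) ∧ m + 1 ≤ j ∧ j ≤ m + n ∧
        w₂ i = w₁ j ∧ w₂ j = w₁ i) ∧
      (∀ k ∈ Set.Icc 1 (m + n), k ∉ I →
        (∀ i ∈ I, (k : ℝ) ≠ s + ((m : ℝ) + n) / 2 + (i : ℝ)) → w₂ k = w₁ k) :=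
  stmt2_general m n s Λ hΛ1 hΛ2 w₁ w₂ hbij₁ hid₁ hbij₂ hid₂ hne hfix
end

section
/- Let m ≤ n and let α be an integer with 0 ≤ α ≤ ⌊(m+n)/2⌋. The number of shuffle permutations w of {1,...,m+n} satisfying w(i) ∈ {2i + n − α − 1, 2i + n − α} for all 1 ≤ i ≤ min(m, α+1) is positive; moreover if α + 1 ≤ m there is exactly one such w with w(i) = 2i + n − α − 1 for all 1 ≤ i ≤ min(m, α+1). -/
/-- Shuffle permutations of `{1,...,m+n}`: bijections of `{1,...,m+n}` (taken to
be the identity outside), increasing on `{1,...,m}` and on `{m+1,...,m+n}`. -/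
def IsShuffle (m n : ℕ) (w : ℕ → ℕ) : Prop :=
  Set.BijOn w (Set.Icc 1 (m + n)) (Set.Icc 1 (m + n)) ∧
  (∀ i ∉ Set.Icc 1 (m + n), w i = i) ∧
  (∀ i j, 1 ≤ i → i < j → j ≤ m → w i < w j) ∧
  (∀ i j, m + 1 ≤ i → i < j → j ≤ m + n → w i < w j)

/-!
A shuffle is determined by its values on the first block `{1, …, m}`: the second block is then
the increasing enumeration of the remaining values. If `w(i) = 2i + n − α − 1` for `i ≤ α + 1 ≤ m`,
then `w(α + 1) = n + α + 1`, which leaves exactly `m − α − 1` values above it for the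
`m − α − 1` remaining positions of the first block, so `w(i) = n + i` there and `w` is unique.
Existence is witnessed by an explicit shuffle of this shape, which exists for every `α`.
-/

theorem StrictMonoOn.eqOn_of_image_eq {α β : Type*} [LinearOrder α] [WellFoundedLT α]
    [Preorder β] {f g : α → β} {s : Set α} (hf : StrictMonoOn f s) (hg : StrictMonoOn g s)
    (h : f '' s = g '' s) : Set.EqOn f g s := by
  have := (hf.strictMono.range_inj hg.strictMono).1 (by
    simpa only [Set.range_comp, Subtype.range_coe] using h)
  exact fun x hx => congrFun this ⟨x, hx⟩

theorem Nat.add_sub_le_of_strictMonoOn_Icc {f : ℕ → ℕ} {a b i j : ℕ}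
    (hf : StrictMonoOn f (Set.Icc a b)) (hai : a ≤ i) (hij : i ≤ j) (hjb : j ≤ b) :
    f i + (j - i) ≤ f j := by
  induction j, hij using Nat.le_induction with
  | base => simp
  | succ k hik ih =>
    have hstep : f k < f (k + 1) := hf ⟨hai.trans hik, by omega⟩ ⟨by omega, hjb⟩ k.lt_succ_self
    have := ih (by omega)
    omega

theorem Nat.eq_add_of_strictMonoOn_Icc {f : ℕ → ℕ} {a b c : ℕ}
    (hf : StrictMonoOn f (Set.Icc a b)) (ha : c ≤ f a) (hb : f b ≤ c + (b - a))
    {i : ℕ} (hi : i ∈ Set.Icc a b) : f i = c + (i - a) := by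
  have hlow := Nat.add_sub_le_of_strictMonoOn_Icc hf le_rfl hi.1 hi.2
  have hhigh := Nat.add_sub_le_of_strictMonoOn_Icc hf hi.1 hi.2 le_rfl
  omega

namespace IsShuffle

variable {m n : ℕ} {w w' : ℕ → ℕ}

theorem strictMonoOn_first (hw : IsShuffle m n w) : StrictMonoOn w (Set.Icc 1 m) :=
  fun i hi j hj hij => hw.2.2.1 i j hi.1 hij hj.2

theorem strictMonoOn_second (hw : IsShuffle m n w) : StrictMonoOn w (Set.Icc (m + 1) (m + n)) :=
  fun i hi j hj hij => hw.2.2.2 i j hi.1 hij hj.2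

theorem image_second (hw : IsShuffle m n w) :
    w '' Set.Icc (m + 1) (m + n) = Set.Icc 1 (m + n) \ w '' Set.Icc 1 m := by
  have hsplit : Set.Icc (m + 1) (m + n) = Set.Icc 1 (m + n) \ Set.Icc 1 m := by
    ext i; simp only [Set.mem_Icc, Set.mem_sdiff]; omega
  rw [hsplit, hw.1.injOn.image_sdiff_subset (Set.Icc_subset_Icc_right (by omega)),
    hw.1.image_eq]

theorem eq_of_eqOn_first (hw : IsShuffle m n w) (hw' : IsShuffle m n w')
    (h : Set.EqOn w w' (Set.Icc 1 m)) : w = w' := by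
  have hsecond : Set.EqOn w w' (Set.Icc (m + 1) (m + n)) :=
    hw.strictMonoOn_second.eqOn_of_image_eq hw'.strictMonoOn_second
      (by rw [hw.image_second, hw'.image_second, h.image_eq])
  funext i
  by_cases hi : i ∈ Set.Icc 1 (m + n)
  · rcases le_or_gt i m with him | him
    · exact h ⟨hi.1, him⟩
    · exact hsecond ⟨him, hi.2⟩
  · rw [hw.2.1 i hi, hw'.2.1 i hi]

end IsShuffle

/-- The first block goes to the values `c + 1, c + 3, …, c + 2k − 1` and then `n + k + 1, …, n + m`;
the second block fills the values `1, …, c`, the gaps `c + 2, …, c + 2k − 2`,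
and `c + 2k, …, n + k`. -/
def interleavedShuffle (m n c k i : ℕ) : ℕ :=
  if i < 1 ∨ m + n < i then i
  else if i ≤ k then c + 2 * i - 1
  else if i ≤ m then n + i
  else if i - m ≤ c then i - m
  else if i - m < c + k then 2 * (i - m) - c
  else i - m + k

theorem isShuffle_interleavedShuffle {m n c k : ℕ} (hk : k ≤ m) (hck : c + k ≤ n + 1) :
    IsShuffle m n (interleavedShuffle m n c k) := by
  have hmaps : Set.MapsTo (interleavedShuffle m n c k) (Set.Icc 1 (m + n)) (Set.Icc 1 (m + n)) := by
    intro i hi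
    simp only [Set.mem_Icc] at hi ⊢
    unfold interleavedShuffle; split_ifs <;> omega
  have hinj : Set.InjOn (interleavedShuffle m n c k) (Set.Icc 1 (m + n)) := by
    intro i hi j hj hij
    simp only [Set.mem_Icc] at hi hj
    unfold interleavedShuffle at hij; split_ifs at hij <;> omega
  refine ⟨(Set.finite_Icc 1 (m + n)).injOn_iff_bijOn_of_mapsTo hmaps |>.1 hinj, ?_, ?_, ?_⟩
  · intro i hi
    simp only [Set.mem_Icc, not_and_or, not_le] at hi
    unfold interleavedShuffle; split_ifs <;> omega
  all_goals
    intro i j hi hij hj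
    unfold interleavedShuffle; split_ifs <;> omega

theorem interleavedShuffle_of_le {m n c k i : ℕ} (hk : k ≤ m) (h1 : 1 ≤ i) (hik : i ≤ k) :
    interleavedShuffle m n c k i = 2 * i + c - 1 := by
  unfold interleavedShuffle; split_ifs <;> omega

theorem interleavedShuffle_of_lt {m n c k i : ℕ} (hki : k < i) (him : i ≤ m) :
    interleavedShuffle m n c k i = n + i := by
  unfold interleavedShuffle; split_ifs <;> omega

theorem stmt11_general (m n α : ℕ) (hmn : m ≤ n) :
    (∃ w : ℕ → ℕ, IsShuffle m n w ∧
      ∀ i, 1 ≤ i → i ≤ min m (α + 1) →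
        (w i = 2 * i + (n - α) - 1 ∨ w i = 2 * i + (n - α))) ∧
    (α + 1 ≤ m →
      ∃! w : ℕ → ℕ, IsShuffle m n w ∧
        ∀ i, 1 ≤ i → i ≤ min m (α + 1) → w i = 2 * i + (n - α) - 1) := by
  let w₀ := interleavedShuffle m n (n - α) (min m (α + 1))
  have hw₀ : IsShuffle m n w₀ := isShuffle_interleavedShuffle (min_le_left _ _) (by omega)
  have hw₀_val : ∀ i, 1 ≤ i → i ≤ min m (α + 1) → w₀ i = 2 * i + (n - α) - 1 :=
    fun i h1 h2 => interleavedShuffle_of_le (min_le_left _ _) h1 h2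
  refine ⟨⟨w₀, hw₀, fun i h1 h2 => .inl (hw₀_val i h1 h2)⟩, fun hαm => ⟨w₀, ⟨hw₀, hw₀_val⟩, ?_⟩⟩
  rintro w ⟨hw, hw_val⟩
  refine hw.eq_of_eqOn_first hw₀ fun i ⟨h1, him⟩ => ?_
  rcases le_or_gt i (α + 1) with hiα | hαi
  · rw [hw_val i h1 (by omega), hw₀_val i h1 (by omega)]
  · have hw_top : w m ≤ m + n := (hw.1.mapsTo (⟨by omega, by omega⟩ : m ∈ Set.Icc 1 (m + n))).2
    have hw_α : n + α + 1 ≤ w (α + 1) := by have := hw_val (α + 1) (by omega) (by omega); omega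
    have hw_shift := Nat.eq_add_of_strictMonoOn_Icc
      (hw.strictMonoOn_first.mono (Set.Icc_subset_Icc_left (by omega))) hw_α (by omega)
      ⟨hαi.le, him⟩
    have hw₀_shift : w₀ i = n + i := interleavedShuffle_of_lt (by omega) him
    omega

/-- Let `m ≤ n` and `0 ≤ α ≤ ⌊(m+n)/2⌋`. There exists a shuffle
permutation `w` with `w(i) ∈ {2i + n − α − 1, 2i + n − α}` for all
`1 ≤ i ≤ min(m, α+1)`; moreover if `α + 1 ≤ m` there is exactly one such `w`
with `w(i) = 2i + n − α − 1` for all `1 ≤ i ≤ min(m, α+1)`. -/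
theorem stmt11 (m n α : ℕ) (hm : 1 ≤ m) (hmn : m ≤ n) (hα : α ≤ (m + n) / 2) :
    (∃ w : ℕ → ℕ, IsShuffle m n w ∧
      ∀ i, 1 ≤ i → i ≤ min m (α + 1) →
        (w i = 2 * i + (n - α) - 1 ∨ w i = 2 * i + (n - α))) ∧
    (α + 1 ≤ m →
      ∃! w : ℕ → ℕ, IsShuffle m n w ∧
        ∀ i, 1 ≤ i → i ≤ min m (α + 1) → w i = 2 * i + (n - α) - 1) :=
  stmt11_general m n α hmn
end
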